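/- arXiv:2604.23791 — 3 statements merged into one kernel-verified Lean document; each statement's English description precedes it below -/
import Mathlib

section
/- Let (Ω, ℱ, P) be a probability space, let N ≥ 1, let A₁, …, A_N be events, and let L ≥ 0 be an integer. Let α⋆ ≥ 0 and suppose that for every k with 1 ≤ k and k + L + 1 ≤ N, every event C in σ(A₁, …, A_k), and every event B in σ(A_{k+L+1}, …, A_N), one has |P(C ∩ B) − P(C)·P(B)| ≤ α⋆. Then P(⋃_{k=1}^N A_k) ≥ 1 − exp(−S_N/(L+1)) − ⌈N/(L+1)⌉·α⋆, where S_N := ∑_{k=1}^N P(A_k). -/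
/-!
Split `1, …, N` into the `L + 1` residue classes modulo `L + 1`; one of them carries at least
the fraction `1/(L+1)` of `S_N`. Along that class consecutive indices are `L + 1` apart, so the
mixing hypothesis lets one peel off the events one at a time: the probability that none of them
occurs is at most the product of the probabilities of their complements plus one `α⋆` per event,
and `∏ (1 - pᵢ) ≤ exp (-∑ pᵢ)`. Padding the family with empty events beyond `N` makes every
class a progression of exactly `⌈N/(L+1)⌉` terms.
-/

open MeasureTheory Finset

theorem Finset.sum_range_mul {M : Type*} [AddCommMonoid M] (f : ℕ → M) (m n : ℕ) :
    ∑ k ∈ range (m * n), f k = ∑ i ∈ range m, ∑ j ∈ range n, f (i * n + j) := by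
  induction m with
  | zero => simp
  | succ m ih => rw [add_one_mul, sum_range_add, ih, sum_range_succ]

theorem Real.prod_one_sub_le_exp_neg_sum {ι : Type*} {s : Finset ι} {p : ι → ℝ}
    (hp : ∀ i ∈ s, p i ≤ 1) : ∏ i ∈ s, (1 - p i) ≤ Real.exp (-∑ i ∈ s, p i) := by
  rw [← sum_neg_distrib, Real.exp_sum]
  exact prod_le_prod (fun i hi => sub_nonneg.2 (hp i hi)) fun i _ => Real.one_sub_le_exp_neg _

namespace AlphaMixing

variable {Ω : Type*}

def truncate (A : ℕ → Set Ω) (N k : ℕ) : Set Ω :=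
  if k ∈ Icc 1 N then A k else ∅

theorem truncate_subset_biUnion (A : ℕ → Set Ω) (N k : ℕ) :
    truncate A N k ⊆ ⋃ k ∈ Icc 1 N, A k := by
  unfold truncate
  split_ifs with hk
  · exact Set.subset_biUnion_of_mem hk
  · exact Set.empty_subset _

variable {A : ℕ → Set Ω} {N : ℕ}

theorem measurableSet_generateFrom_truncate {a b k : ℕ} (h : k ∈ Icc 1 N → k ∈ Set.Icc a b) :
    MeasurableSet[MeasurableSpace.generateFrom (A '' Set.Icc a b)] (truncate A N k) := by
  unfold truncate
  split_ifs with hk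
  exacts [MeasurableSpace.measurableSet_generateFrom ⟨k, h hk, rfl⟩, @MeasurableSet.empty _ (_)]

variable [MeasurableSpace Ω]

/-- The restricted strong-mixing coefficient of `A 1, …, A N` at lag `L + 1` is at most `α`. -/
def IsMixingAtLag (P : Measure Ω) (A : ℕ → Set Ω) (N L : ℕ) (α : ℝ) : Prop :=
  ∀ k, 1 ≤ k → k + L + 1 ≤ N →
    ∀ C : Set Ω, MeasurableSet[MeasurableSpace.generateFrom (A '' Set.Icc 1 k)] C →
    ∀ B : Set Ω, MeasurableSet[MeasurableSpace.generateFrom (A '' Set.Icc (k + L + 1) N)] B →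
      |P.real (C ∩ B) - P.real C * P.real B| ≤ α

theorem measurableSet_truncate (hA : ∀ k ∈ Icc 1 N, MeasurableSet (A k)) (k : ℕ) :
    MeasurableSet (truncate A N k) := by
  unfold truncate
  split_ifs with hk
  exacts [hA k hk, .empty]

theorem sum_measureReal_eq_sum_truncate (P : Measure Ω) {n : ℕ} (hNn : N ≤ n) :
    ∑ k ∈ Icc 1 N, P.real (A k) = ∑ k ∈ range n, P.real (truncate A N (k + 1)) := by
  calc ∑ k ∈ Icc 1 N, P.real (A k) = ∑ k ∈ Icc 1 N, P.real (truncate A N k) :=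
        sum_congr rfl fun k hk => by rw [truncate, if_pos hk]
    _ = ∑ k ∈ Icc 1 n, P.real (truncate A N k) :=
        sum_subset (Icc_subset_Icc_right hNn) fun k _ hk => by
          rw [truncate, if_neg hk, measureReal_empty]
    _ = ∑ k ∈ range n, P.real (truncate A N (k + 1)) := by
        rw [range_eq_Ico, sum_Ico_add' (fun k => P.real (truncate A N k)) 0 n 1]
        rfl

variable {P : Measure Ω} [IsProbabilityMeasure P]

theorem measureReal_biInter_range_le_prod_add {E : ℕ → Set Ω} {α : ℝ} (hα : 0 ≤ α) {n : ℕ}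
    (hstep : ∀ m < n, P.real ((⋂ i ∈ range m, E i) ∩ E m) ≤
      P.real (⋂ i ∈ range m, E i) * P.real (E m) + α) :
    P.real (⋂ i ∈ range n, E i) ≤ ∏ i ∈ range n, P.real (E i) + n * α := by
  induction n with
  | zero => simp
  | succ n ih =>
    have hprev := ih fun m hm => hstep m (hm.trans n.lt_succ_self)
    have hE1 : P.real (E n) ≤ 1 := measureReal_le_one
    rw [prod_range_succ, range_add_one, set_biInter_insert, Set.inter_comm]
    calc _ ≤ P.real (⋂ i ∈ range n, E i) * P.real (E n) + α := hstep n n.lt_succ_self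
      _ ≤ (∏ i ∈ range n, P.real (E i) + n * α) * P.real (E n) + α := by gcongr
      _ ≤ _ := by
        push_cast
        nlinarith [mul_le_mul_of_nonneg_left hE1 (mul_nonneg n.cast_nonneg hα)]

variable {L : ℕ} {α : ℝ}

theorem measureReal_inter_truncate_compl_le (hmix : IsMixingAtLag P A N L α) (hα : 0 ≤ α)
    (j m : ℕ) :
    P.real ((⋂ i ∈ range m, (truncate A N (i * (L + 1) + j + 1))ᶜ) ∩
        (truncate A N (m * (L + 1) + j + 1))ᶜ) ≤
      P.real (⋂ i ∈ range m, (truncate A N (i * (L + 1) + j + 1))ᶜ) *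
        P.real (truncate A N (m * (L + 1) + j + 1))ᶜ + α := by
  by_cases hlast : m * (L + 1) + j + 1 ∈ Icc 1 N
  swap
  · rw [truncate, if_neg hlast, Set.compl_empty, Set.inter_univ, probReal_univ, mul_one]
    linarith
  cases m with
  | zero => simp [hα]
  | succ m =>
    set k := m * (L + 1) + j + 1
    have hk : k + L + 1 = (m + 1) * (L + 1) + j + 1 := by ring
    have hC : MeasurableSet[MeasurableSpace.generateFrom (A '' Set.Icc 1 k)]
        (⋂ i ∈ range (m + 1), (truncate A N (i * (L + 1) + j + 1))ᶜ) :=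
      Finset.measurableSet_biInter _ fun i hi =>
        (measurableSet_generateFrom_truncate fun h => ⟨(mem_Icc.1 h).1,
          show _ ≤ m * (L + 1) + j + 1 by gcongr; exact Nat.lt_succ_iff.1 (mem_range.1 hi)⟩).compl
    have hB : MeasurableSet[MeasurableSpace.generateFrom (A '' Set.Icc (k + L + 1) N)]
        (truncate A N ((m + 1) * (L + 1) + j + 1))ᶜ :=
      (measurableSet_generateFrom_truncate fun h => ⟨hk.le, (mem_Icc.1 h).2⟩).compl
    have hmixed := hmix k (by omega) (hk ▸ (mem_Icc.1 hlast).2) _ hC _ hB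
    linarith [(abs_le.1 hmixed).2]

theorem one_sub_exp_sub_le_measureReal_biUnion (hA : ∀ k ∈ Icc 1 N, MeasurableSet (A k))
    (hmix : IsMixingAtLag P A N L α) (hα : 0 ≤ α) (j M : ℕ) :
    1 - Real.exp (-∑ i ∈ range M, P.real (truncate A N (i * (L + 1) + j + 1))) - M * α ≤
      P.real (⋃ k ∈ Icc 1 N, A k) := by
  set F := fun i => truncate A N (i * (L + 1) + j + 1)
  have hF : ∀ i, MeasurableSet (F i) := fun i => measurableSet_truncate hA _
  have hchain : P.real (⋂ i ∈ range M, (F i)ᶜ) ≤ ∏ i ∈ range M, P.real (F i)ᶜ + M * α :=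
    measureReal_biInter_range_le_prod_add hα fun m _ =>
      measureReal_inter_truncate_compl_le hmix hα j m
  have hnone : P.real (⋂ i ∈ range M, (F i)ᶜ) = 1 - P.real (⋃ i ∈ range M, F i) := by
    rw [← Set.compl_iUnion₂, measureReal_compl (Finset.measurableSet_biUnion _ fun i _ => hF i),
      probReal_univ]
  have hprod : ∏ i ∈ range M, P.real (F i)ᶜ ≤ Real.exp (-∑ i ∈ range M, P.real (F i)) := by
    simp_rw [measureReal_compl (hF _), probReal_univ]
    exact Real.prod_one_sub_le_exp_neg_sum fun i _ => measureReal_le_one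
  have hsub : P.real (⋃ i ∈ range M, F i) ≤ P.real (⋃ k ∈ Icc 1 N, A k) :=
    measureReal_mono (Set.iUnion₂_subset fun i _ => truncate_subset_biUnion A N _)
      (measure_ne_top _ _)
  linarith

end AlphaMixing

open AlphaMixing

theorem alpha_mixing_union_bound_general
    {Ω : Type*} [MeasurableSpace Ω] (P : Measure Ω) [IsProbabilityMeasure P]
    (N : ℕ)
    (A : ℕ → Set Ω) (hA : ∀ k ∈ Finset.Icc 1 N, MeasurableSet (A k))
    (L : ℕ) (αs : ℝ) (hαs : 0 ≤ αs)
    (hmix : ∀ k, 1 ≤ k → k + L + 1 ≤ N →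
      ∀ C : Set Ω,
        MeasurableSet[MeasurableSpace.generateFrom (A '' Set.Icc 1 k)] C →
      ∀ B : Set Ω,
        MeasurableSet[MeasurableSpace.generateFrom (A '' Set.Icc (k + L + 1) N)] B →
          |(P (C ∩ B)).toReal - (P C).toReal * (P B).toReal| ≤ αs) :
    1 - Real.exp (-(∑ k ∈ Finset.Icc 1 N, (P (A k)).toReal) / ((L : ℝ) + 1)) -
        (⌈(N : ℝ) / ((L : ℝ) + 1)⌉₊ : ℝ) * αs ≤
      (P (⋃ k ∈ Finset.Icc 1 N, A k)).toReal := by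
  set M := ⌈(N : ℝ) / ((L : ℝ) + 1)⌉₊
  have hNM : N ≤ M * (L + 1) := by
    have h : (N : ℝ) ≤ M * ((L : ℝ) + 1) := (div_le_iff₀ (by positivity)).1 (Nat.le_ceil _)
    exact_mod_cast h
  have hclasses : ∑ k ∈ Icc 1 N, P.real (A k) =
      ∑ j ∈ range (L + 1), ∑ i ∈ range M, P.real (truncate A N (i * (L + 1) + j + 1)) := by
    rw [sum_measureReal_eq_sum_truncate P hNM, sum_range_mul, sum_comm]
  obtain ⟨j, -, hj⟩ : ∃ j ∈ range (L + 1), (∑ k ∈ Icc 1 N, P.real (A k)) / ((L : ℝ) + 1) ≤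
      ∑ i ∈ range M, P.real (truncate A N (i * (L + 1) + j + 1)) := by
    refine exists_le_of_sum_le nonempty_range_add_one ?_
    rw [sum_const, card_range, nsmul_eq_mul, ← hclasses, Nat.cast_add_one,
      mul_div_cancel₀ _ (by positivity)]
  calc _ ≤ 1 - Real.exp (-∑ i ∈ range M, P.real (truncate A N (i * (L + 1) + j + 1))) - M * αs := by
        rw [neg_div]
        gcongr
        exact hj
    _ ≤ _ := one_sub_exp_sub_le_measureReal_biUnion hA hmix hαs j M

/-- Theorem (α-mixing inequality): if the finite restricted strong-mixing coefficient of
the family `A 1, …, A N` at lag `L + 1` is at most `αs`, then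
`P(⋃ₖ A k) ≥ 1 − exp(−S_N/(L+1)) − ⌈N/(L+1)⌉·αs`. -/
theorem alpha_mixing_union_bound
    {Ω : Type*} [MeasurableSpace Ω] (P : Measure Ω) [IsProbabilityMeasure P]
    (N : ℕ) (hN : 1 ≤ N)
    (A : ℕ → Set Ω) (hA : ∀ k ∈ Finset.Icc 1 N, MeasurableSet (A k))
    (L : ℕ) (αs : ℝ) (hαs : 0 ≤ αs)
    (hmix : ∀ k, 1 ≤ k → k + L + 1 ≤ N →
      ∀ C : Set Ω,
        MeasurableSet[MeasurableSpace.generateFrom (A '' Set.Icc 1 k)] C →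
      ∀ B : Set Ω,
        MeasurableSet[MeasurableSpace.generateFrom (A '' Set.Icc (k + L + 1) N)] B →
          |(P (C ∩ B)).toReal - (P C).toReal * (P B).toReal| ≤ αs) :
    1 - Real.exp (-(∑ k ∈ Finset.Icc 1 N, (P (A k)).toReal) / ((L : ℝ) + 1)) -
        (⌈(N : ℝ) / ((L : ℝ) + 1)⌉₊ : ℝ) * αs ≤
      (P (⋃ k ∈ Finset.Icc 1 N, A k)).toReal :=
  alpha_mixing_union_bound_general P N A hA L αs hαs hmix
end

section
/- Let (Ω, ℱ, P) be a probability space, let N ≥ 1, let A₁, …, A_N be events, and let L ≥ 2 be an integer. Let φ⋆ ≥ 0 and suppose that for every k with 1 ≤ k and k + L + 1 ≤ N, every event C in σ(A₁, …, A_k) with P(C) > 0, and every event B in σ(A_{k+L+1}, …, A_N), one has |P(B ∣ C) − P(B)| ≤ φ⋆. Set S_N := ∑_{k=1}^N P(A_k), T_{L−1} := ∑_{1≤i<j≤N, j−i ≤ L−1} P(A_i ∩ A_j), and κ_{N,L} := ⌈N/L⌉ + 1. Then P(⋃_{k=1}^N A_k) ≥ 1 − exp(−(1/2)(S_N − T_{L−1}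 − κ_{N,L}·φ⋆)₊). -/
/-!
Cut `1, …, N` into consecutive blocks of length `L`. On each block, the second-order Bonferroni
inequality and `1 + x ≤ exp x` bound the probability that no event of the block occurs, plus
`φ⋆`, by `exp (-(S_block - T_block - φ⋆))`. Two blocks of the same parity are separated by a
whole block, i.e. by a gap of `L` indices, so the mixing hypothesis lets the probability that no
event occurs factor, up to `φ⋆` per block, over the even blocks, and likewise over the odd ones.
Multiplying the two estimates bounds `P(⋂ A_kᶜ)²` by the product over all blocks, of which
there are `⌈N/L⌉ ≤ κ_{N,L}`; the block sums add up to `S_N`, and the within-block pairs are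
among the pairs counted by `T_{L-1}`. Taking square roots gives the factor `1/2`.
-/

open MeasureTheory Finset

theorem Finset.sum_filter_lt_insert_of_forall_lt {ι M : Type*} [LinearOrder ι]
    [AddCommMonoid M] (g : ι → ι → M) {a : ι} {s : Finset ι} (ha : ∀ x ∈ s, x < a) :
    ∑ p ∈ (insert a s ×ˢ insert a s).filter (fun p => p.1 < p.2), g p.1 p.2
      = ∑ p ∈ (s ×ˢ s).filter (fun p => p.1 < p.2), g p.1 p.2 + ∑ i ∈ s, g i a := by
  have has : a ∉ s := fun h => lt_irrefl a (ha a h)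
  simp only [sum_filter, sum_product, sum_insert has, lt_irrefl, if_false, zero_add]
  rw [sum_eq_zero fun j hj => if_neg (ha j hj).not_gt, zero_add, add_comm, ← sum_add_distrib]
  refine sum_congr rfl fun i hi => ?_
  rw [if_pos (ha i hi), add_comm]

theorem MeasureTheory.sum_measureReal_sub_sum_inter_le {Ω ι : Type*} [MeasurableSpace Ω]
    [LinearOrder ι] (μ : Measure Ω) [IsFiniteMeasure μ] (A : ι → Set Ω) (s : Finset ι)
    (hA : ∀ i ∈ s, MeasurableSet (A i)) :
    ∑ i ∈ s, μ.real (A i)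
        - ∑ p ∈ (s ×ˢ s).filter (fun p => p.1 < p.2), μ.real (A p.1 ∩ A p.2)
      ≤ μ.real (⋃ i ∈ s, A i) := by
  induction s using Finset.induction_on_max with
  | empty => simp
  | insert a s ha ih =>
    have has : a ∉ s := fun h => lt_irrefl a (ha a h)
    have hAs : ∀ i ∈ s, MeasurableSet (A i) := fun i hi => hA i (mem_insert_of_mem hi)
    have hU : MeasurableSet (⋃ i ∈ s, A i) := .biUnion s.countable_toSet hAs
    have hinter : μ.real ((⋃ i ∈ s, A i) ∩ A a) ≤ ∑ i ∈ s, μ.real (A i ∩ A a) := by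
      rw [Set.iUnion₂_inter]
      exact measureReal_biUnion_finset_le s _
    have hunion := measureReal_union_add_inter (μ := μ) (s := A a) hU (measure_ne_top _ _)
      (measure_ne_top _ _)
    rw [sum_filter_lt_insert_of_forall_lt (fun i j => μ.real (A i ∩ A j)) ha, sum_insert has,
      set_biUnion_insert]
    rw [Set.inter_comm] at hunion
    linarith [ih hAs]

theorem MeasureTheory.measureReal_biInter_le_prod_add {Ω ι : Type*} [MeasurableSpace Ω]
    [LinearOrder ι] {μ : Measure Ω} [IsZeroOrProbabilityMeasure μ] (E : ι → Set Ω)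
    (s : Finset ι) {φ : ℝ} (hφ : 0 ≤ φ)
    (h : ∀ t ∈ s, μ.real (E t ∩ ⋂ j ∈ s.filter (· < t), E j)
      ≤ (μ.real (E t) + φ) * μ.real (⋂ j ∈ s.filter (· < t), E j)) :
    μ.real (⋂ j ∈ s, E j) ≤ ∏ j ∈ s, (μ.real (E j) + φ) := by
  induction s using Finset.induction_on_max with
  | empty => simp
  | insert a s ha ih =>
    have has : a ∉ s := fun h => lt_irrefl a (ha a h)
    have hfilter_a : (insert a s).filter (· < a) = s := by
      rw [filter_insert, if_neg (lt_irrefl a), filter_true_of_mem ha]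
    have hfilter : ∀ t ∈ s, (insert a s).filter (· < t) = s.filter (· < t) := fun t ht => by
      rw [filter_insert, if_neg (ha t ht).not_gt]
    have ih' := ih fun t ht => by simpa only [hfilter t ht] using h t (mem_insert_of_mem ht)
    have ha' := h a (mem_insert_self a s)
    rw [hfilter_a] at ha'
    rw [set_biInter_insert, prod_insert has]
    exact ha'.trans (mul_le_mul_of_nonneg_left ih' (by positivity))

theorem MeasureTheory.measureReal_inter_le_of_abs_div_sub_le {Ω : Type*} [MeasurableSpace Ω]
    {μ : Measure Ω} [IsFiniteMeasure μ] {B C : Set Ω} {φ : ℝ}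
    (h : 0 < μ C → |μ.real (B ∩ C) / μ.real C - μ.real B| ≤ φ) :
    μ.real (B ∩ C) ≤ (μ.real B + φ) * μ.real C := by
  rcases eq_or_ne (μ C) 0 with hC | hC
  · have hCr : μ.real C = 0 := by simp [measureReal_def, hC]
    rw [measureReal_mono_null Set.inter_subset_right hCr, hCr, mul_zero]
  · have hCr : 0 < μ.real C := ENNReal.toReal_pos hC (measure_ne_top μ C)
    rw [← div_le_iff₀ hCr]
    linarith [(abs_le.1 (h (pos_iff_ne_zero.2 hC))).2]

theorem MeasurableSpace.measurableSet_generateFrom_image_biUnion {Ω ι : Type*}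
    (A : ι → Set Ω) {I : Set ι} {s : Finset ι} (hs : ↑s ⊆ I) :
    MeasurableSet[generateFrom (A '' I)] (⋃ i ∈ s, A i) :=
  .biUnion s.countable_toSet fun i hi => measurableSet_generateFrom ⟨i, hs hi, rfl⟩

/-- Block `j` is `{jL + 1, …, min ((j + 1)L) N}`; the blocks `j < (N - 1) / L + 1` partition
`{1, …, N}`. -/
def block (L N j : ℕ) : Finset ℕ := (Icc 1 N).filter (fun i => (i - 1) / L = j)

theorem block_subset_Icc (L N j : ℕ) : block L N j ⊆ Icc 1 N := filter_subset _ _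

theorem mul_lt_of_mem_block {L N j i : ℕ} (hi : i ∈ block L N j) : j * L < i := by
  obtain ⟨hiN, rfl⟩ := mem_filter.1 hi
  have := Nat.div_mul_le_self (i - 1) L
  have := (mem_Icc.1 hiN).1
  omega

theorem le_mul_of_mem_block {L N j i : ℕ} (hL : 0 < L) (hi : i ∈ block L N j) :
    i ≤ (j + 1) * L := by
  obtain ⟨hiN, rfl⟩ := mem_filter.1 hi
  have := (Nat.div_lt_iff_lt_mul hL).1 (Nat.lt_add_one ((i - 1) / L))
  have := (mem_Icc.1 hiN).1
  omega

theorem sum_sum_block {M : Type*} [AddCommMonoid M] (f : ℕ → M) (L N : ℕ) :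
    ∑ j ∈ range ((N - 1) / L + 1), ∑ i ∈ block L N j, f i = ∑ i ∈ Icc 1 N, f i :=
  sum_fiberwise_of_maps_to (fun _ hi => mem_range_succ_iff.2
    (Nat.div_le_div_right (Nat.sub_le_sub_right (mem_Icc.1 hi).2 1))) f

theorem pairwiseDisjoint_block (L N : ℕ) (t : Set ℕ) : t.PairwiseDisjoint (block L N) :=
  fun _ _ _ _ hne => disjoint_filter.2 fun _ _ h1 h2 => hne (h1 ▸ h2)

theorem sub_le_of_mem_block {L N j i i' : ℕ} (hL : 0 < L) (hi : i ∈ block L N j)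
    (hi' : i' ∈ block L N j) : i' - i ≤ L - 1 := by
  have h1 := mul_lt_of_mem_block hi
  have h2 := le_mul_of_mem_block hL hi'
  rw [Nat.succ_mul] at h2
  omega

theorem sum_sum_block_pairs_le {L N : ℕ} (hL : 0 < L) (g : ℕ × ℕ → ℝ)
    (hg : ∀ p, 0 ≤ g p) :
    ∑ j ∈ range ((N - 1) / L + 1),
        ∑ p ∈ (block L N j ×ˢ block L N j).filter (fun p => p.1 < p.2), g p
      ≤ ∑ p ∈ (Icc 1 N ×ˢ Icc 1 N).filter (fun p => p.1 < p.2 ∧ p.2 - p.1 ≤ L - 1),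
          g p := by
  have hdisj : (↑(range ((N - 1) / L + 1)) : Set ℕ).PairwiseDisjoint
      fun j => (block L N j ×ˢ block L N j).filter (fun p => p.1 < p.2) :=
    fun j hj j' hj' hne => disjoint_filter_filter <|
      disjoint_product.2 (Or.inl (pairwiseDisjoint_block L N _ hj hj' hne))
  rw [← sum_biUnion hdisj]
  refine sum_le_sum_of_subset_of_nonneg (fun p hp => ?_) fun p _ _ => hg p
  obtain ⟨j, -, hpj⟩ := mem_biUnion.1 hp
  obtain ⟨hp, hlt⟩ := mem_filter.1 hpj
  obtain ⟨h1, h2⟩ := mem_product.1 hp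
  exact mem_filter.2 ⟨mem_product.2 ⟨block_subset_Icc L N j h1, block_subset_Icc L N j h2⟩,
    hlt, sub_le_of_mem_block hL h1 h2⟩

theorem MeasureTheory.measureReal_compl_biUnion_add_le_exp {Ω ι : Type*} [MeasurableSpace Ω]
    [LinearOrder ι] (μ : Measure Ω) [IsProbabilityMeasure μ] (A : ι → Set Ω) (s : Finset ι)
    (hA : ∀ i ∈ s, MeasurableSet (A i)) (φ : ℝ) :
    μ.real (⋃ i ∈ s, A i)ᶜ + φ ≤ Real.exp (-(∑ i ∈ s, μ.real (A i)
      - ∑ p ∈ (s ×ˢ s).filter (fun p => p.1 < p.2), μ.real (A p.1 ∩ A p.2) - φ)) := by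
  rw [probReal_compl_eq_one_sub (s.measurableSet_biUnion hA)]
  linarith [sum_measureReal_sub_sum_inter_le μ A s hA, Real.add_one_le_exp (-(∑ i ∈ s,
    μ.real (A i) - ∑ p ∈ (s ×ˢ s).filter (fun p => p.1 < p.2), μ.real (A p.1 ∩ A p.2)
      - φ))]

/-- The restricted φ-mixing coefficient of `A 1, …, A N` at lag `L + 1` is at most `φ`. -/
def PhiMixingBounded {Ω : Type*} [MeasurableSpace Ω] (P : Measure Ω) (A : ℕ → Set Ω)
    (N L : ℕ) (φ : ℝ) : Prop :=
  ∀ k, 1 ≤ k → k + L + 1 ≤ N →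
    ∀ C : Set Ω, MeasurableSet[MeasurableSpace.generateFrom (A '' Set.Icc 1 k)] C → 0 < P C →
    ∀ B : Set Ω, MeasurableSet[MeasurableSpace.generateFrom (A '' Set.Icc (k + L + 1) N)] B →
      |P.real (B ∩ C) / P.real C - P.real B| ≤ φ

theorem measureReal_biInter_block_compl_le_prod {Ω : Type*} [MeasurableSpace Ω]
    (P : Measure Ω) [IsProbabilityMeasure P] {N : ℕ} (A : ℕ → Set Ω) {L : ℕ} (hL : 0 < L)
    {φ : ℝ} (hφ : 0 ≤ φ)
    (hmix : PhiMixingBounded P A N L φ) {s : Finset ℕ} (hs : s ⊆ range ((N - 1) / L + 1))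
    (hgap : ∀ j ∈ s, ∀ t ∈ s, j < t → j + 1 < t) :
    P.real (⋂ j ∈ s, (⋃ i ∈ block L N j, A i)ᶜ)
      ≤ ∏ j ∈ s, (P.real (⋃ i ∈ block L N j, A i)ᶜ + φ) := by
  refine measureReal_biInter_le_prod_add _ s hφ fun t ht => ?_
  by_cases ht2 : t < 2
  · have hfirst : s.filter (· < t) = ∅ :=
      filter_eq_empty_iff.2 fun j hj hjt => by have := hgap j hj t ht hjt; omega
    simp only [hfirst, notMem_empty, Set.iInter_of_empty, Set.iInter_univ, Set.inter_univ,
      probReal_univ, mul_one]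
    linarith
  obtain ⟨t, rfl⟩ : ∃ t', t = t' + 2 := ⟨t - 2, by omega⟩
  have htN : (t + 2) * L + 1 ≤ N := by
    have := (Nat.le_div_iff_mul_le hL).1 (mem_range_succ_iff.1 (hs ht))
    have := Nat.le_mul_of_pos_left L (show 0 < t + 2 by omega)
    omega
  have hsucc : (t + 1) * L + L = (t + 2) * L := (Nat.succ_mul _ _).symm
  -- the earlier blocks of `s` end by index `(t + 1) L`, block `t + 2` starts after `(t + 2) L`
  refine measureReal_inter_le_of_abs_div_sub_le fun hC =>
    hmix ((t + 1) * L) (Nat.mul_pos (by omega) hL) (by omega) _ ?_ hC _ ?_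
  · refine .biInter (countable_toSet _) fun j hj => .compl <|
      MeasurableSpace.measurableSet_generateFrom_image_biUnion A fun i hi => ?_
    obtain ⟨hjs, hjt⟩ := mem_filter.1 hj
    have := hgap j hjs _ ht hjt
    have := le_mul_of_mem_block hL hi
    have := Nat.mul_le_mul_right L (show j + 1 ≤ t + 1 by omega)
    exact ⟨(mem_Icc.1 (block_subset_Icc L N j hi)).1, by omega⟩
  · refine .compl <| MeasurableSpace.measurableSet_generateFrom_image_biUnion A fun i hi => ?_
    have := mul_lt_of_mem_block hi
    exact ⟨by omega, (mem_Icc.1 (block_subset_Icc L N _ hi)).2⟩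

theorem measureReal_compl_biUnion_sq_le_prod_block {Ω : Type*} [MeasurableSpace Ω]
    (P : Measure Ω) [IsProbabilityMeasure P] {N : ℕ} (A : ℕ → Set Ω) {L : ℕ} (hL : 0 < L)
    {φ : ℝ} (hφ : 0 ≤ φ)
    (hmix : PhiMixingBounded P A N L φ) :
    P.real (⋃ k ∈ Icc 1 N, A k)ᶜ ^ 2
      ≤ ∏ j ∈ range ((N - 1) / L + 1), (P.real (⋃ i ∈ block L N j, A i)ᶜ + φ) := by
  have hclass : ∀ s ⊆ range ((N - 1) / L + 1),
      (∀ j ∈ s, ∀ t ∈ s, j < t → j + 1 < t) → P.real (⋃ k ∈ Icc 1 N, A k)ᶜ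
        ≤ ∏ j ∈ s, (P.real (⋃ i ∈ block L N j, A i)ᶜ + φ) :=
    fun s hs hgap => (measureReal_mono <| Set.subset_iInter₂ fun j _ =>
      Set.compl_subset_compl.2 <| Set.biUnion_subset_biUnion_left <|
        coe_subset.2 (block_subset_Icc L N j)).trans
      (measureReal_biInter_block_compl_le_prod P A hL hφ hmix hs hgap)
  rw [sq, ← prod_filter_mul_prod_filter_not (range ((N - 1) / L + 1)) (fun j => j % 2 = 0)]
  refine mul_le_mul (hclass _ (filter_subset _ _) ?_) (hclass _ (filter_subset _ _) ?_)
    measureReal_nonneg (prod_nonneg fun _ _ => by positivity) <;>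
  · intro j hj t ht _
    have := (mem_filter.1 hj).2
    have := (mem_filter.1 ht).2
    omega

theorem prod_block_le_exp {Ω : Type*} [MeasurableSpace Ω]
    (P : Measure Ω) [IsProbabilityMeasure P] {N : ℕ} (A : ℕ → Set Ω)
    (hA : ∀ k ∈ Icc 1 N, MeasurableSet (A k)) {L : ℕ} (hL : 0 < L) {φ : ℝ}
    (hφ : 0 ≤ φ) :
    ∏ j ∈ range ((N - 1) / L + 1), (P.real (⋃ i ∈ block L N j, A i)ᶜ + φ)
      ≤ Real.exp (-((∑ k ∈ Icc 1 N, P.real (A k))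
          - (∑ p ∈ (Icc 1 N ×ˢ Icc 1 N).filter (fun p => p.1 < p.2 ∧ p.2 - p.1 ≤ L - 1),
              P.real (A p.1 ∩ A p.2))
          - ((⌈(N : ℝ) / (L : ℝ)⌉₊ : ℝ) + 1) * φ)) := by
  have hM : (((N - 1) / L + 1 : ℕ) : ℝ) ≤ (⌈(N : ℝ) / (L : ℝ)⌉₊ : ℝ) + 1 := by
    have : (N - 1) / L ≤ ⌈(N : ℝ) / (L : ℝ)⌉₊ :=
      (Nat.div_le_div_right (Nat.sub_le N 1)).trans
        ((Nat.floor_div_eq_div (K := ℝ) N L).symm.le.trans (Nat.floor_le_ceil _))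
    exact_mod_cast Nat.add_le_add_right this 1
  calc ∏ j ∈ range ((N - 1) / L + 1), (P.real (⋃ i ∈ block L N j, A i)ᶜ + φ)
      ≤ ∏ j ∈ range ((N - 1) / L + 1), Real.exp (-(∑ i ∈ block L N j, P.real (A i)
          - ∑ p ∈ (block L N j ×ˢ block L N j).filter (fun p => p.1 < p.2),
              P.real (A p.1 ∩ A p.2) - φ)) :=
        prod_le_prod (fun _ _ => by positivity) fun j _ =>
          measureReal_compl_biUnion_add_le_exp P A _
            (fun i hi => hA i (block_subset_Icc L N j hi)) φ
    _ = Real.exp (-(∑ k ∈ Icc 1 N, P.real (A k)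
          - ∑ j ∈ range ((N - 1) / L + 1),
              ∑ p ∈ (block L N j ×ˢ block L N j).filter (fun p => p.1 < p.2),
                P.real (A p.1 ∩ A p.2) - ((N - 1) / L + 1 : ℕ) * φ)) := by
        rw [← Real.exp_sum, ← sum_sum_block _ L N]
        simp only [sum_neg_distrib, sum_sub_distrib, sum_const, card_range, nsmul_eq_mul]
    _ ≤ _ := Real.exp_le_exp.2 <| by
        linarith [sum_sum_block_pairs_le (N := N) hL (fun p => P.real (A p.1 ∩ A p.2))
          fun _ => measureReal_nonneg, mul_le_mul_of_nonneg_right hM hφ]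

theorem Real.le_exp_neg_half_mul_max_of_sq_le {q D : ℝ} (hq0 : 0 ≤ q) (hq1 : q ≤ 1)
    (h : q ^ 2 ≤ Real.exp (-D)) : q ≤ Real.exp (-(1 / 2) * max D 0) := by
  rw [← pow_le_pow_iff_left₀ hq0 (Real.exp_pos _).le two_ne_zero, ← Real.exp_nat_mul]
  rcases le_total D 0 with hD | hD
  · rw [max_eq_right hD, mul_zero, mul_zero, Real.exp_zero]
    exact pow_le_one₀ hq0 hq1
  · rw [max_eq_left hD, show ((2 : ℕ) : ℝ) * (-(1 / 2) * D) = -D by push_cast; ring]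
    exact h

theorem second_order_phi_mixing_bound_general
    {Ω : Type*} [MeasurableSpace Ω] (P : Measure Ω) [IsProbabilityMeasure P]
    (N : ℕ)
    (A : ℕ → Set Ω) (hA : ∀ k ∈ Finset.Icc 1 N, MeasurableSet (A k))
    (L : ℕ) (hL : 2 ≤ L) (φs : ℝ) (hφs : 0 ≤ φs)
    (hmix : ∀ k, 1 ≤ k → k + L + 1 ≤ N →
      ∀ C : Set Ω,
        MeasurableSet[MeasurableSpace.generateFrom (A '' Set.Icc 1 k)] C → 0 < P C →
      ∀ B : Set Ω,
        MeasurableSet[MeasurableSpace.generateFrom (A '' Set.Icc (k + L + 1) N)] B →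
          |(P (B ∩ C)).toReal / (P C).toReal - (P B).toReal| ≤ φs) :
    1 - Real.exp (-(1 / 2) *
        max ((∑ k ∈ Finset.Icc 1 N, (P (A k)).toReal)
          - (∑ p ∈ (Finset.Icc 1 N ×ˢ Finset.Icc 1 N).filter
              (fun p => p.1 < p.2 ∧ p.2 - p.1 ≤ L - 1), (P (A p.1 ∩ A p.2)).toReal)
          - ((⌈(N : ℝ) / (L : ℝ)⌉₊ : ℝ) + 1) * φs) 0) ≤
      (P (⋃ k ∈ Finset.Icc 1 N, A k)).toReal := by
  have hL' : 0 < L := by omega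
  have hq := Real.le_exp_neg_half_mul_max_of_sq_le measureReal_nonneg measureReal_le_one
    ((measureReal_compl_biUnion_sq_le_prod_block P A hL' hφs hmix).trans
      (prod_block_le_exp P A hA hL' hφs))
  rw [probReal_compl_eq_one_sub ((Icc 1 N).measurableSet_biUnion hA)] at hq
  simp only [← measureReal_def]
  linarith

/-- Theorem (second-order φ-mixing inequality): with
`S_N = ∑ₖ P(A k)`, `T_{L−1} = ∑_{1≤i<j≤N, j−i≤L−1} P(A i ∩ A j)` and
`κ_{N,L} = ⌈N/L⌉ + 1`,
`P(⋃ₖ A k) ≥ 1 − exp(−(1/2)(S_N − T_{L−1} − κ_{N,L}·φs)₊)`. -/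
theorem second_order_phi_mixing_bound
    {Ω : Type*} [MeasurableSpace Ω] (P : Measure Ω) [IsProbabilityMeasure P]
    (N : ℕ) (hN : 1 ≤ N)
    (A : ℕ → Set Ω) (hA : ∀ k ∈ Finset.Icc 1 N, MeasurableSet (A k))
    (L : ℕ) (hL : 2 ≤ L) (φs : ℝ) (hφs : 0 ≤ φs)
    (hmix : ∀ k, 1 ≤ k → k + L + 1 ≤ N →
      ∀ C : Set Ω,
        MeasurableSet[MeasurableSpace.generateFrom (A '' Set.Icc 1 k)] C → 0 < P C →
      ∀ B : Set Ω,
        MeasurableSet[MeasurableSpace.generateFrom (A '' Set.Icc (k + L + 1) N)] B →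
          |(P (B ∩ C)).toReal / (P C).toReal - (P B).toReal| ≤ φs) :
    1 - Real.exp (-(1 / 2) *
        max ((∑ k ∈ Finset.Icc 1 N, (P (A k)).toReal)
          - (∑ p ∈ (Finset.Icc 1 N ×ˢ Finset.Icc 1 N).filter
              (fun p => p.1 < p.2 ∧ p.2 - p.1 ≤ L - 1), (P (A p.1 ∩ A p.2)).toReal)
          - ((⌈(N : ℝ) / (L : ℝ)⌉₊ : ℝ) + 1) * φs) 0) ≤
      (P (⋃ k ∈ Finset.Icc 1 N, A k)).toReal :=
  second_order_phi_mixing_bound_general P N A hA L hL φs hφs hmix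
end

section
/- Let (Ω, ℱ, P) be a probability space, let N ≥ 1, and let A₁, …, A_N be events with p := min_{1≤k≤N} P(A_k) > 0. Let C ≥ 1 and ρ ∈ (0,1), and suppose that for every integer n ≥ 1, every k with k + n ≤ N, every event D in σ(A₁, …, A_k) with P(D) > 0, and every event B in σ(A_{k+n}, …, A_N), one has |P(B ∣ D) − P(B)| ≤ C·ρⁿ. Let L₀ ≥ 0 be an integer with C·ρ^{L₀+1} ≤ p/2. Then P(⋃_{k=1}^N A_k) ≥ 1 − exp(−S_N/(2(L₀+1))) ≥ 1 − exp(−pN/(2(L₀+1))), where S_N := ∑_{k=1}^N P(A_k). -/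
/-!
Split the indices `1, …, N` into the `L = L₀ + 1` residue classes modulo `L`; by pigeonhole
one class `F` carries mass `∑_{k ∈ F} P(A k) ≥ S_N / L`. Two indices of `F` are at least `L`
apart, so conditioning on having avoided the earlier events of `F`, mixing at lag `L` bounds
the probability of also avoiding `A j` by `1 - P(A j) + C ρ^L ≤ 1 - P(A j) / 2`. Multiplying
these bounds and using `1 - x ≤ exp (-x)` gives `P(⋂_{k ∈ F} (A k)ᶜ) ≤ exp (-S_N / (2L))`.
-/

open MeasureTheory Finset

theorem Nat.add_le_of_lt_of_mod_eq {i j L : ℕ} (hij : i < j) (hmod : i % L = j % L) :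
    i + L ≤ j := by
  have hdvd : L ∣ j - i := (Nat.modEq_iff_dvd' hij.le).mp hmod
  have := Nat.le_of_dvd (Nat.sub_pos_of_lt hij) hdvd
  omega

theorem Finset.exists_div_le_sum_filter_mod_eq {L : ℕ} (hL : 0 < L) (s : Finset ℕ)
    (w : ℕ → ℝ) :
    ∃ r < L, (∑ k ∈ s, w k) / L ≤ ∑ k ∈ s with k % L = r, w k := by
  obtain ⟨r, hr, hsum⟩ := exists_le_sum_fiber_of_maps_to_of_nsmul_le_sum
    (fun k _ => mem_range.mpr (Nat.mod_lt k hL)) (nonempty_range_iff.mpr hL.ne')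
    (b := (∑ k ∈ s, w k) / L) (w := w) (by
      rw [card_range, nsmul_eq_mul, mul_div_cancel₀ _ (by exact_mod_cast hL.ne')])
  exact ⟨r, mem_range.mp hr, hsum⟩

theorem Finset.prod_le_exp_neg_sum {ι : Type*} {s : Finset ι} {g x : ι → ℝ}
    (hg : ∀ i ∈ s, 0 ≤ g i) (hgx : ∀ i ∈ s, g i ≤ 1 - x i) :
    ∏ i ∈ s, g i ≤ Real.exp (-∑ i ∈ s, x i) := by
  rw [← sum_neg_distrib, Real.exp_sum]
  exact prod_le_prod hg fun i hi => (hgx i hi).trans (Real.one_sub_le_exp_neg _)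

section Mixing

variable {Ω : Type*} {A : ℕ → Set Ω}

theorem measurableSet_generateFrom_biInter_compl {s : Finset ℕ} {a b : ℕ}
    (hs : ∀ i ∈ s, i ∈ Set.Icc a b) :
    MeasurableSet[MeasurableSpace.generateFrom (A '' Set.Icc a b)] (⋂ i ∈ s, (A i)ᶜ) :=
  measurableSet_biInter _ fun i hi =>
    (MeasurableSpace.measurableSet_generateFrom (Set.mem_image_of_mem A (hs i hi))).compl

variable [MeasurableSpace Ω] (P : Measure Ω)

theorem measureReal_inter_le_of_abs_div_sub_le [IsFiniteMeasure P] {B D : Set Ω} {ε : ℝ}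
    (h : 0 < P D → |P.real (B ∩ D) / P.real D - P.real B| ≤ ε) :
    P.real (B ∩ D) ≤ P.real D * (P.real B + ε) := by
  rcases eq_or_ne (P D) 0 with hD | hD
  · simp [measureReal_def, measure_mono_null Set.inter_subset_right hD, hD]
  · have hDr : 0 < P.real D := ENNReal.toReal_pos hD (measure_ne_top P D)
    have := (abs_le.mp (h (pos_iff_ne_zero.mpr hD))).2
    rw [← div_le_iff₀' hDr]
    linarith

variable [IsProbabilityMeasure P]

theorem measureReal_biInter_compl_le_prod {N L : ℕ} {ε : ℝ} (hε : 0 ≤ ε)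
    (hmix : ∀ k, 1 ≤ k → k + L ≤ N → ∀ D : Set Ω,
      MeasurableSet[MeasurableSpace.generateFrom (A '' Set.Icc 1 k)] D → 0 < P D →
      ∀ B : Set Ω, MeasurableSet[MeasurableSpace.generateFrom (A '' Set.Icc (k + L) N)] B →
        |P.real (B ∩ D) / P.real D - P.real B| ≤ ε)
    (s : Finset ℕ) (hA : ∀ i ∈ s, MeasurableSet (A i)) (hs : ∀ i ∈ s, i ∈ Set.Icc 1 N)
    (hsep : ∀ i ∈ s, ∀ j ∈ s, i < j → i + L ≤ j) :
    P.real (⋂ i ∈ s, (A i)ᶜ) ≤ ∏ i ∈ s, (1 - P.real (A i) + ε) := by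
  induction s using Finset.induction_on_max with
  | empty => simp
  | insert j s hlt ih =>
    have hsub : s ⊆ insert j s := subset_insert j s
    have hjs := mem_insert_self j s
    have hgap : ∀ x ∈ s, x + L ≤ j := fun x hx => hsep x (hsub hx) j hjs (hlt x hx)
    set D := ⋂ i ∈ s, (A i)ᶜ
    have hcompl : P.real (A j)ᶜ = 1 - P.real (A j) := probReal_compl_eq_one_sub (hA j hjs)
    -- `D` only involves indices `≤ j - L`, so mixing at lag `L` applies with `k = j - L`.
    have hstep : P.real ((A j)ᶜ ∩ D) ≤ P.real D * (1 - P.real (A j) + ε) := by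
      rcases s.eq_empty_or_nonempty with rfl | ⟨i, hi⟩
      · simp [D, hcompl, hε]
      have hiL := hgap i hi
      have hi1 := (hs i (hsub hi)).1
      have hjN := (hs j hjs).2
      have hj : j ∈ Set.Icc (j - L + L) N := ⟨by omega, hjN⟩
      rw [← hcompl]
      have hB := MeasurableSpace.measurableSet_generateFrom (Set.mem_image_of_mem A hj)
      refine measureReal_inter_le_of_abs_div_sub_le P fun hD =>
        hmix (j - L) (by omega) (by omega) D ?_ hD _ hB.compl
      exact measurableSet_generateFrom_biInter_compl fun x hx =>
        ⟨(hs x (hsub hx)).1, by have := hgap x hx; omega⟩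
    have hD := ih (fun i hi => hA i (hsub hi)) (fun i hi => hs i (hsub hi))
      fun i hi k hk => hsep i (hsub hi) k (hsub hk)
    have hfac : 0 ≤ 1 - P.real (A j) + ε := by
      linarith [measureReal_le_one (μ := P) (s := A j)]
    rw [set_biInter_insert, prod_insert fun h => lt_irrefl j (hlt j h)]
    calc P.real ((A j)ᶜ ∩ D) ≤ P.real D * (1 - P.real (A j) + ε) := hstep
      _ ≤ (∏ i ∈ s, (1 - P.real (A i) + ε)) * (1 - P.real (A j) + ε) :=
        mul_le_mul_of_nonneg_right hD hfac
      _ = _ := mul_comm _ _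

theorem measureReal_biUnion_eq_one_sub {s : Finset ℕ} (hA : ∀ i ∈ s, MeasurableSet (A i)) :
    P.real (⋃ i ∈ s, A i) = 1 - P.real (⋂ i ∈ s, (A i)ᶜ) := by
  rw [← Set.compl_iUnion₂, probReal_compl_eq_one_sub (measurableSet_biUnion _ hA),
    sub_sub_cancel]

end Mixing

theorem geometric_phi_mixing_bound_general
    {Ω : Type*} [MeasurableSpace Ω] (P : Measure Ω) [IsProbabilityMeasure P]
    (N : ℕ)
    (A : ℕ → Set Ω) (hA : ∀ k ∈ Finset.Icc 1 N, MeasurableSet (A k))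
    (p : ℝ) (hp : p = sInf ((fun k => (P (A k)).toReal) '' Set.Icc 1 N)) (hp0 : 0 < p)
    (C ρ : ℝ)
    (hmix : ∀ n : ℕ, 1 ≤ n → ∀ k, 1 ≤ k → k + n ≤ N →
      ∀ D : Set Ω,
        MeasurableSet[MeasurableSpace.generateFrom (A '' Set.Icc 1 k)] D → 0 < P D →
      ∀ B : Set Ω,
        MeasurableSet[MeasurableSpace.generateFrom (A '' Set.Icc (k + n) N)] B →
          |(P (B ∩ D)).toReal / (P D).toReal - (P B).toReal| ≤ C * ρ ^ n)
    (L₀ : ℕ) (hL₀ : C * ρ ^ (L₀ + 1) ≤ p / 2) :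
    1 - Real.exp (-(∑ k ∈ Finset.Icc 1 N, (P (A k)).toReal) / (2 * ((L₀ : ℝ) + 1))) ≤
        (P (⋃ k ∈ Finset.Icc 1 N, A k)).toReal ∧
    1 - Real.exp (-(p * (N : ℝ)) / (2 * ((L₀ : ℝ) + 1))) ≤
        1 - Real.exp (-(∑ k ∈ Finset.Icc 1 N, (P (A k)).toReal) /
          (2 * ((L₀ : ℝ) + 1))) := by
  have hpA : ∀ k ∈ Icc 1 N, p ≤ P.real (A k) := fun k hk =>
    hp ▸ csInf_le ((Set.finite_Icc 1 N).image _).bddBelow ⟨k, by simpa using hk, rfl⟩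
  have hpN : p * N ≤ ∑ k ∈ Icc 1 N, P.real (A k) := by
    simpa [mul_comm] using card_nsmul_le_sum _ _ _ hpA
  refine ⟨?_, by gcongr; exact hpN⟩
  obtain ⟨r, -, hr⟩ :=
    (Icc 1 N).exists_div_le_sum_filter_mod_eq L₀.succ_pos fun k => P.real (A k)
  set F := (Icc 1 N).filter (· % (L₀ + 1) = r)
  have hF : F ⊆ Icc 1 N := filter_subset _ _
  have hsep : ∀ i ∈ F, ∀ j ∈ F, i < j → i + (L₀ + 1) ≤ j := fun i hi j hj hij =>
    Nat.add_le_of_lt_of_mod_eq hij ((mem_filter.1 hi).2.trans (mem_filter.1 hj).2.symm)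
  have hinter := measureReal_biInter_compl_le_prod P (half_pos hp0).le
    (fun k hk hkN D hD hDpos B hB => (hmix _ L₀.succ_pos k hk hkN D hD hDpos B hB).trans hL₀)
    F (fun i hi => hA i (hF hi)) (fun i hi => by simpa using hF hi) hsep
  have hprod :
      ∏ i ∈ F, (1 - P.real (A i) + p / 2) ≤ Real.exp (-∑ i ∈ F, P.real (A i) / 2) :=
    prod_le_exp_neg_sum
      (fun i hi => by linarith [hpA i (hF hi), measureReal_le_one (μ := P) (s := A i)])
      fun i hi => by linarith [hpA i (hF hi)]
  have hmass : -∑ i ∈ F, P.real (A i) / 2 ≤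
      -(∑ k ∈ Icc 1 N, P.real (A k)) / (2 * ((L₀ : ℝ) + 1)) := by
    push_cast at hr
    rw [← sum_div, neg_div, neg_le_neg_iff, mul_comm, ← div_div]
    gcongr
  calc 1 - Real.exp (-(∑ k ∈ Icc 1 N, P.real (A k)) / (2 * ((L₀ : ℝ) + 1)))
      ≤ 1 - Real.exp (-∑ i ∈ F, P.real (A i) / 2) := by gcongr
    _ ≤ 1 - P.real (⋂ i ∈ F, (A i)ᶜ) := by linarith
    _ = P.real (⋃ i ∈ F, A i) :=
      (measureReal_biUnion_eq_one_sub P fun i hi => hA i (hF hi)).symm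
    _ ≤ P.real (⋃ k ∈ Icc 1 N, A k) :=
      measureReal_mono (Set.biUnion_subset_biUnion_left hF) (measure_ne_top _ _)

/-- Proposition (geometric φ-mixing with positive lower mass): if the finite restricted
φ-mixing coefficient at every lag `n` is at most `C·ρⁿ`, `p = min_{1≤k≤N} P(A k) > 0`,
and `C·ρ^{L₀+1} ≤ p/2`, then
`P(⋃ₖ A k) ≥ 1 − exp(−S_N/(2(L₀+1))) ≥ 1 − exp(−pN/(2(L₀+1)))`. -/
theorem geometric_phi_mixing_bound
    {Ω : Type*} [MeasurableSpace Ω] (P : Measure Ω) [IsProbabilityMeasure P]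
    (N : ℕ) (hN : 1 ≤ N)
    (A : ℕ → Set Ω) (hA : ∀ k ∈ Finset.Icc 1 N, MeasurableSet (A k))
    (p : ℝ) (hp : p = sInf ((fun k => (P (A k)).toReal) '' Set.Icc 1 N)) (hp0 : 0 < p)
    (C ρ : ℝ) (hC : 1 ≤ C) (hρ : ρ ∈ Set.Ioo (0 : ℝ) 1)
    (hmix : ∀ n : ℕ, 1 ≤ n → ∀ k, 1 ≤ k → k + n ≤ N →
      ∀ D : Set Ω,
        MeasurableSet[MeasurableSpace.generateFrom (A '' Set.Icc 1 k)] D → 0 < P D →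
      ∀ B : Set Ω,
        MeasurableSet[MeasurableSpace.generateFrom (A '' Set.Icc (k + n) N)] B →
          |(P (B ∩ D)).toReal / (P D).toReal - (P B).toReal| ≤ C * ρ ^ n)
    (L₀ : ℕ) (hL₀ : C * ρ ^ (L₀ + 1) ≤ p / 2) :
    1 - Real.exp (-(∑ k ∈ Finset.Icc 1 N, (P (A k)).toReal) / (2 * ((L₀ : ℝ) + 1))) ≤
        (P (⋃ k ∈ Finset.Icc 1 N, A k)).toReal ∧
    1 - Real.exp (-(p * (N : ℝ)) / (2 * ((L₀ : ℝ) + 1))) ≤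
        1 - Real.exp (-(∑ k ∈ Finset.Icc 1 N, (P (A k)).toReal) /
          (2 * ((L₀ : ℝ) + 1))) :=
  geometric_phi_mixing_bound_general P N A hA p hp hp0 C ρ hmix L₀ hL₀
end
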